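/- arXiv:2010.14146 — 5 statements merged into one kernel-verified Lean document; each statement's English description precedes it below -/
import Mathlib

section
/- Theorem 1(ii) (Z-estimation efficiency bound, finite T): If Δ_{T,A} and Λ_T are invertible, then the matrix Δ_{T,A}⁻¹ Σ_{T,A} (Δ_{T,A}⁻¹)ᵀ − Λ_T⁻¹ is positive semidefinite; equivalently, Δ_{T,A}⁻¹ Σ_{T,A} (Δ_{T,A}⁻¹)ᵀ dominates Λ_T⁻¹ in the Loewner order. -/
open MeasureTheory Matrix

/-- Entrywise expectation of a random matrix. -/
noncomputable def matExp {Ω : Type*} [MeasureSpace Ω] {m n : Type*}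
    (M : Ω → Matrix m n ℝ) : Matrix m n ℝ :=
  Matrix.of fun i j => ∫ ω, M ω i j

/-! Pointwise, `[[A S Aᵀ, A D], [(A D)ᵀ, Dᵀ S⁻¹ D]] = B S Bᵀ` with `B = [A; Dᵀ S⁻¹]`, so this block
matrix is positive semidefinite, and taking expectations and averaging over `t` keeps it so:
`[[Σ, Δ], [Δᵀ, Λ]] ⪰ 0`. Its invertible corner `Λ` is then positive definite, the Schur complement
`Σ - Δ Λ⁻¹ Δᵀ` is positive semidefinite, and conjugating it by `Δ⁻¹` gives `Δ⁻¹ Σ Δ⁻ᵀ - Λ⁻¹`. -/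

namespace Matrix

open scoped ComplexOrder

variable {𝕜 m n : Type*} [RCLike 𝕜] [Fintype m] [Fintype n] [DecidableEq n]

theorem PosDef.posSemidef_fromBlocks_mul_inv_mul {S : Matrix n n 𝕜} (hS : S.PosDef)
    (A : Matrix m n 𝕜) (D : Matrix n m 𝕜) :
    (fromBlocks (A * S * Aᴴ) (A * D) (A * D)ᴴ (Dᴴ * S⁻¹ * D)).PosSemidef := by
  have := hS.isUnit.invertible
  have hSinv : S⁻¹ᴴ = S⁻¹ := by rw [conjTranspose_nonsing_inv, hS.isHermitian.eq]
  have hfactor : fromBlocks (A * S * Aᴴ) (A * D) (A * D)ᴴ (Dᴴ * S⁻¹ * D)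
      = fromRows A (Dᴴ * S⁻¹) * S * (fromRows A (Dᴴ * S⁻¹))ᴴ := by
    rw [fromRows_mul, conjTranspose_fromRows_eq_fromCols_conjTranspose, fromRows_mul_fromCols]
    simp only [conjTranspose_mul, hSinv, conjTranspose_conjTranspose, Matrix.mul_assoc,
      mul_inv_cancel_left_of_invertible, inv_mul_cancel_left_of_invertible]
  rw [hfactor]
  exact hS.posSemidef.mul_mul_conjTranspose_same _

theorem PosSemidef.inv_conj_sub_inv_of_fromBlocks {A B D : Matrix n n 𝕜}
    (h : (fromBlocks A B Bᴴ D).PosSemidef) (hB : IsUnit B) (hD : IsUnit D) :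
    (B⁻¹ * A * B⁻¹ᴴ - D⁻¹).PosSemidef := by
  have hDpd : D.PosDef := (h.submatrix Sum.inr : D.PosSemidef).posDef_iff_isUnit.mpr hD
  have := hD.invertible
  have := hB.invertible
  have hschur := (PosDef.fromBlocks₂₂ A B hDpd).mp h
  have hconj : B⁻¹ * (A - B * D⁻¹ * Bᴴ) * B⁻¹ᴴ = B⁻¹ * A * B⁻¹ᴴ - D⁻¹ := by
    simp [Matrix.mul_sub, Matrix.sub_mul, Matrix.mul_assoc, conjTranspose_nonsing_inv]
  exact hconj ▸ hschur.mul_mul_conjTranspose_same B⁻¹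

end Matrix

section matExp

variable {Ω m n p q ι : Type*} [MeasureSpace Ω]

theorem matExp_transpose (M : Ω → Matrix m n ℝ) : matExp (fun ω => (M ω)ᵀ) = (matExp M)ᵀ := rfl

theorem fromBlocks_smul_sum_matExp (c : ℝ) (s : Finset ι) (P : ι → Ω → Matrix m p ℝ)
    (Q : ι → Ω → Matrix m q ℝ) (R : ι → Ω → Matrix n p ℝ) (U : ι → Ω → Matrix n q ℝ) :
    fromBlocks (c • ∑ t ∈ s, matExp (P t)) (c • ∑ t ∈ s, matExp (Q t))
        (c • ∑ t ∈ s, matExp (R t)) (c • ∑ t ∈ s, matExp (U t))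
      = c • ∑ t ∈ s, matExp fun ω => fromBlocks (P t ω) (Q t ω) (R t ω) (U t ω) := by
  ext (i | i) (j | j) <;> simp [matExp, Matrix.sum_apply]

theorem integrable_fromBlocks_apply {P : Ω → Matrix m p ℝ} {Q : Ω → Matrix m q ℝ}
    {R : Ω → Matrix n p ℝ} {U : Ω → Matrix n q ℝ}
    (hP : ∀ i j, Integrable fun ω => P ω i j) (hQ : ∀ i j, Integrable fun ω => Q ω i j)
    (hR : ∀ i j, Integrable fun ω => R ω i j) (hU : ∀ i j, Integrable fun ω => U ω i j) :
    ∀ i j, Integrable fun ω => fromBlocks (P ω) (Q ω) (R ω) (U ω) i j := by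
  rintro (i | i) (j | j)
  exacts [hP i j, hQ i j, hR i j, hU i j]

variable [Fintype m] [Fintype n]

theorem dotProduct_matExp_mulVec {M : Ω → Matrix m n ℝ}
    (hM : ∀ i j, Integrable fun ω => M ω i j) (x : m → ℝ) (y : n → ℝ) :
    x ⬝ᵥ (matExp M *ᵥ y) = ∫ ω, x ⬝ᵥ (M ω *ᵥ y) := by
  have hterm : ∀ i j, Integrable fun ω => x i * (M ω i j * y j) :=
    fun i j => ((hM i j).mul_const _).const_mul _
  simp only [dotProduct, mulVec, matExp, of_apply, Finset.mul_sum]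
  rw [integral_finsetSum _ fun i _ => integrable_finsetSum _ fun j _ => hterm i j]
  refine Finset.sum_congr rfl fun i _ => ?_
  rw [integral_finsetSum _ fun j _ => hterm i j]
  simp only [integral_const_mul, integral_mul_const]

theorem posSemidef_matExp {M : Ω → Matrix m m ℝ} (hM : ∀ i j, Integrable fun ω => M ω i j)
    (hpsd : ∀ᵐ ω, (M ω).PosSemidef) : (matExp M).PosSemidef := by
  refine .of_dotProduct_mulVec_nonneg ?_ fun x => ?_
  · ext i j
    refine integral_congr_ae ?_
    filter_upwards [hpsd] with ω hω
    exact congrFun₂ hω.isHermitian i j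
  · rw [star_trivial, dotProduct_matExp_mulVec hM]
    refine integral_nonneg_of_ae ?_
    filter_upwards [hpsd] with ω hω
    simpa using hω.dotProduct_mulVec_nonneg x

end matExp

theorem Z_estimation_efficiency_bound_general
    {Ω : Type*} [MeasureSpace Ω]
    {k q T : ℕ}
    (S : Fin T → Ω → Matrix (Fin k) (Fin k) ℝ)
    (D : Fin T → Ω → Matrix (Fin k) (Fin q) ℝ)
    (A : Fin T → Ω → Matrix (Fin q) (Fin k) ℝ)
    (hSpd : ∀ t, ∀ᵐ ω, (S t ω).PosDef)
    (hint1 : ∀ t i j, Integrable fun ω => (A t ω * S t ω * (A t ω)ᵀ) i j)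
    (hint2 : ∀ t i j, Integrable fun ω => (A t ω * D t ω) i j)
    (hint3 : ∀ t i j, Integrable fun ω => ((D t ω)ᵀ * (S t ω)⁻¹ * D t ω) i j)
    (SigT DeltaT LamT : Matrix (Fin q) (Fin q) ℝ)
    (hSig : SigT = (T : ℝ)⁻¹ • ∑ t : Fin T, matExp fun ω => A t ω * S t ω * (A t ω)ᵀ)
    (hDelta : DeltaT = (T : ℝ)⁻¹ • ∑ t : Fin T, matExp fun ω => A t ω * D t ω)
    (hLam : LamT = (T : ℝ)⁻¹ • ∑ t : Fin T, matExp fun ω => (D t ω)ᵀ * (S t ω)⁻¹ * D t ω)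
    (hDeltaInv : IsUnit DeltaT.det) (hLamInv : IsUnit LamT.det) :
    (DeltaT⁻¹ * SigT * (DeltaT⁻¹)ᵀ - LamT⁻¹).PosSemidef := by
  have hcov : (fromBlocks SigT DeltaT DeltaTᴴ LamT).PosSemidef := by
    rw [conjTranspose_eq_transpose_of_trivial, hSig, hDelta, hLam, transpose_smul,
      transpose_sum]
    simp_rw [← matExp_transpose]
    rw [fromBlocks_smul_sum_matExp]
    refine (posSemidef_sum _ fun t _ => posSemidef_matExp ?_ ?_).smul (by positivity)
    · exact integrable_fromBlocks_apply (hint1 t) (hint2 t) (fun i j => hint2 t j i) (hint3 t)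
    · filter_upwards [hSpd t] with ω hω
      simpa using hω.posSemidef_fromBlocks_mul_inv_mul (A t ω) (D t ω)
  simpa using hcov.inv_conj_sub_inv_of_fromBlocks ((isUnit_iff_isUnit_det _).mpr hDeltaInv)
    ((isUnit_iff_isUnit_det _).mpr hLamInv)

/-- Theorem 1(ii), the Z-estimation efficiency bound at finite `T`:
if `Δ_{T,A}` and `Λ_T` are invertible, then
`Δ_{T,A}⁻¹ Σ_{T,A} (Δ_{T,A}⁻¹)ᵀ − Λ_T⁻¹` is positive semidefinite. -/
theorem Z_estimation_efficiency_bound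
    {Ω : Type*} [MeasureSpace Ω] [IsProbabilityMeasure (volume : Measure Ω)]
    {k q T : ℕ} (hk : 1 ≤ k) (hq : 1 ≤ q) (hT : 1 ≤ T)
    (S : Fin T → Ω → Matrix (Fin k) (Fin k) ℝ)
    (D : Fin T → Ω → Matrix (Fin k) (Fin q) ℝ)
    (A : Fin T → Ω → Matrix (Fin q) (Fin k) ℝ)
    (hSmeas : ∀ t i j, Measurable fun ω => S t ω i j)
    (hDmeas : ∀ t i j, Measurable fun ω => D t ω i j)
    (hAmeas : ∀ t i j, Measurable fun ω => A t ω i j)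
    (hSsymm : ∀ t, ∀ᵐ ω, (S t ω).IsSymm)
    (hSpd : ∀ t, ∀ᵐ ω, (S t ω).PosDef)
    (hint1 : ∀ t i j, Integrable fun ω => (A t ω * S t ω * (A t ω)ᵀ) i j)
    (hint2 : ∀ t i j, Integrable fun ω => (A t ω * D t ω) i j)
    (hint3 : ∀ t i j, Integrable fun ω => ((D t ω)ᵀ * (S t ω)⁻¹ * D t ω) i j)
    (SigT DeltaT LamT : Matrix (Fin q) (Fin q) ℝ)
    (hSig : SigT = (T : ℝ)⁻¹ • ∑ t : Fin T, matExp fun ω => A t ω * S t ω * (A t ω)ᵀ)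
    (hDelta : DeltaT = (T : ℝ)⁻¹ • ∑ t : Fin T, matExp fun ω => A t ω * D t ω)
    (hLam : LamT = (T : ℝ)⁻¹ • ∑ t : Fin T, matExp fun ω => (D t ω)ᵀ * (S t ω)⁻¹ * D t ω)
    (hDeltaInv : IsUnit DeltaT.det) (hLamInv : IsUnit LamT.det) :
    (DeltaT⁻¹ * SigT * (DeltaT⁻¹)ᵀ - LamT⁻¹).PosSemidef :=
  Z_estimation_efficiency_bound_general S D A hSpd hint1 hint2 hint3 SigT DeltaT LamT hSig hDelta
    hLam hDeltaInv hLamInv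
end

section
/- Random eigenvalue lemma: Let (Ω, 𝒜, ℙ) be a probability space, n ≥ 1, C ∈ ℝ^{n×n} a deterministic matrix, and ξ : Ω → ℝ, V : Ω → ℝ^n measurable maps with V(ω) ≠ 0 for ℙ-a.e. ω and ξ(ω) · V(ω) = C V(ω) for ℙ-a.e. ω. Assume the richness condition: for every measurable set B ⊆ Ω with ℙ(B) = 1 there exist n+1 pairwise distinct vectors in the image {V(ω) : ω ∈ B} such that every n of them are linearly independent. Then there exists a constant c ∈ ℝ such that ξ = c ℙ-a.s., and C = c · I_n. -/
open MeasureTheory Matrix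

/-- Richness condition (condition (DQ2)/(QES2) of the paper): for every measurable set `B`
of full probability there are `n + 1` pairwise distinct vectors in the image `{V ω : ω ∈ B}`
such that every `n` of them are linearly independent. -/
def Rich {Ω : Type*} [MeasureSpace Ω] {n : ℕ} (V : Ω → Fin n → ℝ) : Prop :=
  ∀ B : Set Ω, MeasurableSet B → volume B = 1 →
    ∃ v : Fin (n + 1) → Fin n → ℝ, Function.Injective v ∧
      (∀ i, ∃ ω ∈ B, V ω = v i) ∧
      ∀ i : Fin (n + 1),
        LinearIndependent ℝ fun j : {j : Fin (n + 1) // j ≠ i} => v j.1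

/-! Take vectors `vₖ = V(ωₖ)`, `k ≤ n`, as in the richness condition, with `C vₖ = μₖ vₖ`.
Being `n + 1` vectors in dimension `n`, they satisfy a relation `∑ gₖ vₖ = 0`, and since any `n`
of them are independent, every `gₖ` is nonzero. Applying `C` to the relation and subtracting
`μᵢ` times it gives the relation `∑ gₖ (μₖ - μᵢ) vₖ = 0`, which does not involve `vᵢ`; hence all
`μₖ` equal `μᵢ`. The vectors other than `vᵢ` form a basis on which `C` acts as `μᵢ`, so
`C = μᵢ • 1`, and then `ξ = μᵢ` wherever `V ≠ 0`. -/

section GeneralPosition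

variable {K M ι : Type*} [Field K] [AddCommGroup M] [Module K M] [Fintype ι] {v : ι → M}

theorem LinearIndependent.eq_zero_of_sum_smul_eq_zero_of_apply_eq_zero {i : ι}
    (hv : LinearIndependent K fun j : {j // j ≠ i} => v j.1) {g : ι → K}
    (hg : ∑ k, g k • v k = 0) (hgi : g i = 0) : g = 0 := by
  classical
  have hsub : ∑ k : {k // k ≠ i}, g k • v k = 0 := by
    rwa [Fintype.sum_eq_add_sum_subtype_ne _ i, hgi, zero_smul, zero_add] at hg
  funext j
  by_cases hji : j = i
  · exact hji ▸ hgi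
  · exact Fintype.linearIndependent_iff.mp hv (fun k => g k) hsub ⟨j, hji⟩

theorem exists_sum_smul_eq_zero_forall_ne_zero [FiniteDimensional K M]
    (hcard : Module.finrank K M < Fintype.card ι)
    (hv : ∀ i, LinearIndependent K fun j : {j // j ≠ i} => v j.1) :
    ∃ g : ι → K, ∑ i, g i • v i = 0 ∧ ∀ i, g i ≠ 0 := by
  have hdep : ¬ LinearIndependent K v := fun h => hcard.not_ge h.fintype_card_le_finrank
  obtain ⟨g, hg, i, hgi⟩ := Fintype.not_linearIndependent_iff.mp hdep
  exact ⟨g, hg, fun j hgj => hgi (congrFun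
    ((hv j).eq_zero_of_sum_smul_eq_zero_of_apply_eq_zero hg hgj) i)⟩

theorem eigenvalue_eq_of_sum_smul_eq_zero {f : Module.End K M} {μ : ι → K}
    (hf : ∀ i, f (v i) = μ i • v i) {g : ι → K} (hg : ∑ k, g k • v k = 0)
    (hg0 : ∀ k, g k ≠ 0) {i : ι} (hv : LinearIndependent K fun j : {j // j ≠ i} => v j.1)
    (k : ι) : μ k = μ i := by
  have hrel : ∑ k, (g k * (μ k - μ i)) • v k = 0 := calc
    ∑ k, (g k * (μ k - μ i)) • v k = f (∑ k, g k • v k) - μ i • ∑ k, g k • v k := by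
      simp only [map_sum, map_smul, hf, Finset.smul_sum, smul_smul, ← Finset.sum_sub_distrib,
        ← sub_smul]
      exact Finset.sum_congr rfl fun k _ => by congr 1; ring
    _ = 0 := by rw [hg, map_zero, smul_zero, sub_zero]
  have := congrFun (hv.eq_zero_of_sum_smul_eq_zero_of_apply_eq_zero hrel (by simp)) k
  exact sub_eq_zero.mp ((mul_eq_zero.mp this).resolve_left (hg0 k))

theorem Module.End.eq_smul_one_of_apply_eq_smul [FiniteDimensional K M]
    (hcard : Fintype.card ι = Module.finrank K M + 1)
    (hv : ∀ i, LinearIndependent K fun j : {j // j ≠ i} => v j.1)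
    {f : Module.End K M} {μ : ι → K} (hf : ∀ i, f (v i) = μ i • v i) (i : ι) :
    f = μ i • 1 := by
  classical
  obtain ⟨g, hg, hg0⟩ := exists_sum_smul_eq_zero_forall_ne_zero (by omega) hv
  have hμ := eigenvalue_eq_of_sum_smul_eq_zero hf hg hg0 (hv i)
  have hspan := (hv i).span_eq_top_of_card_eq_finrank' (by simp [Fintype.card_subtype_compl, hcard])
  exact LinearMap.ext_on_range hspan fun j => by simp [hf, hμ]

end GeneralPosition

theorem random_eigenvalue_lemma_general
    {Ω : Type*} [MeasureSpace Ω] [IsProbabilityMeasure (volume : Measure Ω)]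
    {n : ℕ}
    (C : Matrix (Fin n) (Fin n) ℝ)
    (ξ : Ω → ℝ) (V : Ω → Fin n → ℝ)
    (hVne : ∀ᵐ ω, V ω ≠ 0)
    (heig : ∀ᵐ ω, ξ ω • V ω = C.mulVec (V ω))
    (hrich : Rich V) :
    ∃ c : ℝ, (∀ᵐ ω, ξ ω = c) ∧ C = c • (1 : Matrix (Fin n) (Fin n) ℝ) := by
  obtain ⟨B, hBae, hBmeas, hB⟩ := heig.exists_measurable_mem
  obtain ⟨v, -, hvB, hv⟩ := hrich B hBmeas ((mem_ae_iff_prob_eq_one hBmeas).mp hBae)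
  choose w hwB hwv using hvB
  have hCv : ∀ i, toLin' C (v i) = ξ (w i) • v i := fun i => by
    rw [toLin'_apply, ← hwv i, hB _ (hwB i)]
  have hC : C = ξ (w 0) • 1 := toLin'.injective <| by
    rw [map_smul, toLin'_one, ← Module.End.one_eq_id]
    exact Module.End.eq_smul_one_of_apply_eq_smul (by simp) hv hCv 0
  refine ⟨ξ (w 0), ?_, hC⟩
  filter_upwards [hVne, heig] with ω hω hωC
  exact smul_left_injective ℝ hω (by dsimp only; rw [hωC, hC, smul_mulVec, one_mulVec])

/-- Random eigenvalue lemma: if `ξ(ω) • V(ω) = C V(ω)` a.s. with `V ≠ 0`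
a.s. and the image of `V` is rich, then `ξ` is a.s. equal to some constant `c` and
`C = c • I`. -/
theorem random_eigenvalue_lemma
    {Ω : Type*} [MeasureSpace Ω] [IsProbabilityMeasure (volume : Measure Ω)]
    {n : ℕ} (hn : 1 ≤ n)
    (C : Matrix (Fin n) (Fin n) ℝ)
    (ξ : Ω → ℝ) (V : Ω → Fin n → ℝ)
    (hξmeas : Measurable ξ) (hVmeas : Measurable V)
    (hVne : ∀ᵐ ω, V ω ≠ 0)
    (heig : ∀ᵐ ω, ξ ω • V ω = C.mulVec (V ω))
    (hrich : Rich V) :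
    ∃ c : ℝ, (∀ᵐ ω, ξ ω = c) ∧ C = c • (1 : Matrix (Fin n) (Fin n) ℝ) :=
  random_eigenvalue_lemma_general C ξ V hVne heig hrich
end

section
/- If-direction of Theorem 2(A) (the pseudo-efficient M-estimator attains the efficient instruments): In the double-quantile block setup, assume q₁ = q₂ and V_α = V_β =: V ℙ-a.s. (equal model gradients), and suppose there exist constants c₁, c₂, c₃ > 0 such that, ℙ-a.s., f_α = c₁ f_β, w₁ = c₂ f_α, and w₂ = c₃ f_β (conditions (13)–(15) of the paper). Then the deterministic block matrix C := [[α(1−α)c₂ I_{q₁}, α(1−β)c₁c₂ I_{q₁}], [α(1−β)(c₃/c₁) I_{q₁}, β(1−β)c₃ I_{q₁}]] ∈ ℝ^{2q₁×2q₁} is invertible, with determinant (α c₂ c₃ (1−β)(β−α))^{q₁} ≠ 0, and satisfies A_g = C Dᵀ S⁻¹ ℙ-a.s. -/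
open MeasureTheory Matrix

/-- The matrix `D` of the double-quantile block setup: first row `(f_α V_αᵀ, 0)`,
second row `(0, f_β V_βᵀ)`. -/
def dqD {q₁ q₂ : ℕ} (fα fβ : ℝ) (Vα : Fin q₁ → ℝ) (Vβ : Fin q₂ → ℝ) :
    Matrix (Fin 2) (Fin q₁ ⊕ Fin q₂) ℝ :=
  Matrix.of fun i j =>
    Sum.elim (fun j₁ => if i = 0 then fα * Vα j₁ else 0)
      (fun j₂ => if i = 1 then fβ * Vβ j₂ else 0) j

/-- The M-estimator instrument matrix `A_g` of the double-quantile block setup: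
first column `(w₁ V_α, 0)ᵀ`, second column `(0, w₂ V_β)ᵀ`. -/
def dqA {q₁ q₂ : ℕ} (w₁ w₂ : ℝ) (Vα : Fin q₁ → ℝ) (Vβ : Fin q₂ → ℝ) :
    Matrix (Fin q₁ ⊕ Fin q₂) (Fin 2) ℝ :=
  Matrix.of fun i j =>
    Sum.elim (fun i₁ => if j = 0 then w₁ * Vα i₁ else 0)
      (fun i₂ => if j = 1 then w₂ * Vβ i₂ else 0) i

/-!
With equal gradients, `A_g` and `Dᵀ` are both of the form `fromRows (V ⊗ x) (V ⊗ y)` for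
coefficient rows `x, y ∈ ℝ²`. Right multiplication by `S` and left multiplication by a block
matrix of scalar multiples of the identity only act on these coefficients, so `A_g S = C Dᵀ`
reduces to the `2 × 2` identity `diag(w₁, w₂) S = K diag(f_α, f_β)`, where `K` collects the
scalars of `C`; this is exactly what conditions (13)–(15) give. The determinant of `C` is
`(det K)^{q₁}`, by the Schur complement of its top-left block.
-/

namespace Matrix

variable {K : Type*} [Field K] {n : Type*} [Fintype n] [DecidableEq n]

theorem det_fromBlocks_smul_one {a : K} (ha : a ≠ 0) (b c d : K) :
    (fromBlocks (a • 1) (b • 1) (c • 1) (d • 1) : Matrix (n ⊕ n) (n ⊕ n) K).det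
      = (a * d - b * c) ^ Fintype.card n := by
  let : Invertible (a • (1 : Matrix n n K)) :=
    ⟨a⁻¹ • 1, by simp [smul_smul, ha], by simp [smul_smul, ha]⟩
  rw [det_fromBlocks₁₁, show ⅟(a • (1 : Matrix n n K)) = a⁻¹ • 1 from rfl]
  simp only [Matrix.mul_smul, smul_smul, ← sub_smul, det_smul, det_one, mul_one,
    ← mul_pow]
  congr 1
  field_simp

end Matrix

theorem dqD_transpose {q₁ q₂ : ℕ} (f₁ f₂ : ℝ) (Vα : Fin q₁ → ℝ) (Vβ : Fin q₂ → ℝ) :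
    (dqD f₁ f₂ Vα Vβ)ᵀ = dqA f₁ f₂ Vα Vβ := by
  ext (i | i) j <;> rfl

theorem dqA_eq_fromRows {q₁ q₂ : ℕ} (w₁ w₂ : ℝ) (Vα : Fin q₁ → ℝ) (Vβ : Fin q₂ → ℝ) :
    dqA w₁ w₂ Vα Vβ = fromRows (vecMulVec Vα ![w₁, 0]) (vecMulVec Vβ ![0, w₂]) := by
  ext (i | i) j <;> fin_cases j <;> simp [dqA, mul_comm]

theorem dqA_mul_eq_fromBlocks_mul_dqA {q : ℕ} (V : Fin q → ℝ) {w₁ w₂ f₁ f₂ : ℝ}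
    (S : Matrix (Fin 2) (Fin 2) ℝ) {a b c d : ℝ}
    (h : diagonal ![w₁, w₂] * S = !![a, b; c, d] * diagonal ![f₁, f₂]) :
    dqA w₁ w₂ V V * S
      = (fromBlocks (a • 1) (b • 1) (c • 1) (d • 1) : Matrix (Fin q ⊕ Fin q) (Fin q ⊕ Fin q) ℝ)
        * dqA f₁ f₂ V V := by
  rw [dqA_eq_fromRows, dqA_eq_fromRows, fromRows_mul, fromBlocks_mul_fromRows]
  simp only [vecMulVec_mul, Matrix.smul_mul, Matrix.one_mul, ← vecMulVec_smul, ← vecMulVec_add]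
  simp only [← ext_iff, Fin.forall_fin_two, diagonal_mul, cons_mul, empty_mul, of_apply,
    cons_val', cons_val_fin_one, cons_val_zero, cons_val_one] at h
  congr 2 <;> ext j <;> fin_cases j <;> simp [vecMul, dotProduct, Fin.sum_univ_two, h]

theorem dq_pseudo_efficient_attains_general
    {Ω : Type*} [MeasureSpace Ω]
    {q₁ : ℕ}
    {α β : ℝ} (hα : 0 < α) (hαβ : α < β) (hβ : β < 1)
    (Vα Vβ : Ω → Fin q₁ → ℝ) (fα fβ w₁ w₂ : Ω → ℝ)
    (hVeq : ∀ᵐ ω, Vα ω = Vβ ω)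
    {c₁ c₂ c₃ : ℝ} (hc₁ : 0 < c₁) (hc₂ : 0 < c₂) (hc₃ : 0 < c₃)
    (h13 : ∀ᵐ ω, fα ω = c₁ * fβ ω)
    (h14 : ∀ᵐ ω, w₁ ω = c₂ * fα ω)
    (h15 : ∀ᵐ ω, w₂ ω = c₃ * fβ ω)
    (S : Matrix (Fin 2) (Fin 2) ℝ)
    (hS : S = !![α * (1 - α), α * (1 - β); α * (1 - β), β * (1 - β)])
    (C : Matrix (Fin q₁ ⊕ Fin q₁) (Fin q₁ ⊕ Fin q₁) ℝ)
    (hC : C = Matrix.fromBlocks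
      ((α * (1 - α) * c₂) • (1 : Matrix (Fin q₁) (Fin q₁) ℝ))
      ((α * (1 - β) * c₁ * c₂) • (1 : Matrix (Fin q₁) (Fin q₁) ℝ))
      ((α * (1 - β) * (c₃ / c₁)) • (1 : Matrix (Fin q₁) (Fin q₁) ℝ))
      ((β * (1 - β) * c₃) • (1 : Matrix (Fin q₁) (Fin q₁) ℝ))) :
    IsUnit C.det ∧ C.det = (α * c₂ * c₃ * (1 - β) * (β - α)) ^ q₁ ∧
      ∀ᵐ ω, dqA (w₁ ω) (w₂ ω) (Vα ω) (Vβ ω)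
        = C * (dqD (fα ω) (fβ ω) (Vα ω) (Vβ ω))ᵀ * S⁻¹ := by
  have hα₁ : 0 < 1 - α := by linarith
  have hβ₁ : 0 < 1 - β := by linarith
  have hβα : 0 < β - α := by linarith
  have hdet : C.det = (α * c₂ * c₃ * (1 - β) * (β - α)) ^ q₁ := by
    rw [hC, det_fromBlocks_smul_one (by positivity), Fintype.card_fin]
    field_simp
    ring
  have hS_det : S.det = α * (1 - β) * (β - α) := by
    rw [hS, det_fin_two_of]
    ring
  have hS_unit : IsUnit S.det := isUnit_iff_ne_zero.2 (hS_det ▸ by positivity)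
  refine ⟨hdet ▸ isUnit_iff_ne_zero.2 (by positivity), hdet, ?_⟩
  filter_upwards [hVeq, h13, h14, h15] with ω hV hf hw₁ hw₂
  have hweights : diagonal ![w₁ ω, w₂ ω] * S = !![α * (1 - α) * c₂, α * (1 - β) * c₁ * c₂;
      α * (1 - β) * (c₃ / c₁), β * (1 - β) * c₃] * diagonal ![fα ω, fβ ω] := by
    rw [hS, hw₁, hw₂, hf]
    ext i j
    fin_cases i <;> fin_cases j <;> simp <;> field_simp
  rw [← hV, dqD_transpose, hC, ← dqA_mul_eq_fromBlocks_mul_dqA _ _ hweights,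
    mul_nonsing_inv_cancel_right _ _ hS_unit]

/-- If-direction of Theorem 2(A): under equal model gradients and the
conditions (13)–(15) of the paper, the explicit block matrix `C` is invertible with
determinant `(α c₂ c₃ (1−β)(β−α))^{q₁}` and satisfies `A_g = C Dᵀ S⁻¹` ℙ-a.s. -/
theorem dq_pseudo_efficient_attains
    {Ω : Type*} [MeasureSpace Ω] [IsProbabilityMeasure (volume : Measure Ω)]
    {q₁ : ℕ} (hq₁ : 1 ≤ q₁)
    {α β : ℝ} (hα : 0 < α) (hαβ : α < β) (hβ : β < 1)
    (Vα Vβ : Ω → Fin q₁ → ℝ) (fα fβ w₁ w₂ : Ω → ℝ)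
    (hVαmeas : Measurable Vα) (hVβmeas : Measurable Vβ)
    (hfαmeas : Measurable fα) (hfβmeas : Measurable fβ)
    (hw₁meas : Measurable w₁) (hw₂meas : Measurable w₂)
    (hfαpos : ∀ᵐ ω, 0 < fα ω) (hfβpos : ∀ᵐ ω, 0 < fβ ω)
    (hw₁pos : ∀ᵐ ω, 0 < w₁ ω) (hw₂pos : ∀ᵐ ω, 0 < w₂ ω)
    (hVeq : ∀ᵐ ω, Vα ω = Vβ ω)
    {c₁ c₂ c₃ : ℝ} (hc₁ : 0 < c₁) (hc₂ : 0 < c₂) (hc₃ : 0 < c₃)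
    (h13 : ∀ᵐ ω, fα ω = c₁ * fβ ω)
    (h14 : ∀ᵐ ω, w₁ ω = c₂ * fα ω)
    (h15 : ∀ᵐ ω, w₂ ω = c₃ * fβ ω)
    (S : Matrix (Fin 2) (Fin 2) ℝ)
    (hS : S = !![α * (1 - α), α * (1 - β); α * (1 - β), β * (1 - β)])
    (C : Matrix (Fin q₁ ⊕ Fin q₁) (Fin q₁ ⊕ Fin q₁) ℝ)
    (hC : C = Matrix.fromBlocks
      ((α * (1 - α) * c₂) • (1 : Matrix (Fin q₁) (Fin q₁) ℝ))
      ((α * (1 - β) * c₁ * c₂) • (1 : Matrix (Fin q₁) (Fin q₁) ℝ))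
      ((α * (1 - β) * (c₃ / c₁)) • (1 : Matrix (Fin q₁) (Fin q₁) ℝ))
      ((β * (1 - β) * c₃) • (1 : Matrix (Fin q₁) (Fin q₁) ℝ))) :
    IsUnit C.det ∧ C.det = (α * c₂ * c₃ * (1 - β) * (β - α)) ^ q₁ ∧
      ∀ᵐ ω, dqA (w₁ ω) (w₂ ω) (Vα ω) (Vβ ω)
        = C * (dqD (fα ω) (fβ ω) (Vα ω) (Vβ ω))ᵀ * S⁻¹ :=
  dq_pseudo_efficient_attains_general hα hαβ hβ Vα Vβ fα fβ w₁ w₂ hVeq hc₁ hc₂ hc₃ h13 h14 h15 S hS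
    C hC
end

section
/- Only-if direction of Theorem 2(A): In the double-quantile block setup, assume in addition q₁ = q₂, V_α = V_β =: V ℙ-a.s. (equal model gradients), V ≠ 0 ℙ-a.s., and that V satisfies the richness condition in ℝ^{q₁}. If there exists an invertible deterministic matrix C ∈ ℝ^{2q₁×2q₁} such that A_g = C Dᵀ S⁻¹ ℙ-a.s., then there exist constants c₁, c₂, c₃ > 0 such that, ℙ-a.s., f_α = c₁ f_β, w₁ = c₂ f_α, and w₂ = c₃ f_β (conditions (13)–(15) of the paper). -/
open MeasureTheory Matrix

/-!
Multiplying `A_g = C Dᵀ S⁻¹` on the right by `S` and reading off three blocks shows that, almost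
surely, `V` is an eigenvector of the blocks `C₁₁`, `C₁₂`, `C₂₂` of `C`, with eigenvalues
`S₀₀ w₁ / f_α`, `S₀₁ w₁ / f_β` and `S₁₁ w₂ / f_β`. Richness provides `q₁ + 1` such eigenvectors in
general position. A linear dependency among them has no zero coefficient, so applying a block to it
forces all their eigenvalues to agree: each block is a scalar matrix. Hence the three ratios are
almost surely constant, which gives (13)–(15).
-/

open Module

section GeneralPosition

variable {K E ι : Type*} [Field K] [AddCommGroup E] [Module K E] [Fintype ι] {v : ι → E}

theorem eq_zero_of_sum_smul_eq_zero_of_linearIndependent_ne {i : ι}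
    (hv : LinearIndependent K fun j : {j // j ≠ i} => v j.1) {g : ι → K}
    (hg : ∑ j, g j • v j = 0) (hgi : g i = 0) : g = 0 := by
  classical
  rw [Fintype.sum_eq_add_sum_subtype_ne _ i, hgi, zero_smul, zero_add] at hg
  funext j
  by_cases hj : j = i
  · rwa [hj]
  · exact Fintype.linearIndependent_iff.mp hv (fun j => g j) hg ⟨j, hj⟩

theorem LinearMap.exists_eq_smul_one_of_eigenvectors_in_general_position
    [FiniteDimensional K E] (hcard : Fintype.card ι = finrank K E + 1)
    (hv : ∀ i, LinearIndependent K fun j : {j // j ≠ i} => v j.1)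
    {f : E →ₗ[K] E} {l : ι → K} (hfv : ∀ i, f (v i) = l i • v i) : ∃ a : K, f = a • 1 := by
  obtain ⟨g, hg, i₀, hgi₀⟩ : ∃ g : ι → K, ∑ i, g i • v i = 0 ∧ ∃ i, g i ≠ 0 :=
    Fintype.not_linearIndependent_iff.mp fun h => by
      have := h.fintype_card_le_finrank; omega
  have hg_ne : ∀ i, g i ≠ 0 := fun i hgi =>
    hgi₀ (congrFun (eq_zero_of_sum_smul_eq_zero_of_linearIndependent_ne (hv i) hg hgi) i₀)
  have hl : ∀ i, l i = l i₀ := by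
    have hsum : ∑ i, (g i * (l i - l i₀)) • v i = 0 := by
      calc ∑ i, (g i * (l i - l i₀)) • v i = f (∑ i, g i • v i) - l i₀ • ∑ i, g i • v i := by
            simp only [map_sum, map_smul, hfv, Finset.smul_sum, ← Finset.sum_sub_distrib,
              smul_smul]
            exact Finset.sum_congr rfl fun i _ => by rw [mul_sub, sub_smul, mul_comm (l i₀)]
        _ = 0 := by rw [hg, map_zero, smul_zero, sub_zero]
    intro i
    have := congrFun (eq_zero_of_sum_smul_eq_zero_of_linearIndependent_ne (hv i₀) hsum
      (by rw [sub_self, mul_zero])) i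
    simpa [hg_ne i, sub_eq_zero] using this
  have hspan : Submodule.span K (Set.range v) = ⊤ := by
    classical
    rw [eq_top_iff, ← (hv i₀).span_eq_top_of_card_eq_finrank'
      (by simp [Fintype.card_subtype_compl, hcard])]
    exact Submodule.span_mono (Set.range_comp_subset_range _ _)
  exact ⟨l i₀, LinearMap.ext_on_range hspan fun i => by simp [hfv, hl i]⟩

end GeneralPosition

theorem smul_toBlocks_mulVec_of_dqA_mul_eq {q₁ q₂ : ℕ} {w₁ w₂ fα fβ : ℝ}
    {Vα : Fin q₁ → ℝ} {Vβ : Fin q₂ → ℝ} {S : Matrix (Fin 2) (Fin 2) ℝ}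
    {C : Matrix (Fin q₁ ⊕ Fin q₂) (Fin q₁ ⊕ Fin q₂) ℝ}
    (h : dqA w₁ w₂ Vα Vβ * S = C * (dqD fα fβ Vα Vβ)ᵀ) :
    fα • (C.toBlocks₁₁ *ᵥ Vα) = (S 0 0 * w₁) • Vα ∧
      fβ • (C.toBlocks₁₂ *ᵥ Vβ) = (S 0 1 * w₁) • Vα ∧
      fβ • (C.toBlocks₂₂ *ᵥ Vβ) = (S 1 1 * w₂) • Vβ := by
  refine ⟨funext fun i => ?_, funext fun i => ?_, funext fun i => ?_⟩
  · simpa [mul_apply, dqA, dqD, mulVec, dotProduct, toBlocks₁₁, Finset.mul_sum, mul_assoc, mul_comm,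
      mul_left_comm] using (congrFun (congrFun h (Sum.inl i)) 0).symm
  · simpa [mul_apply, dqA, dqD, mulVec, dotProduct, toBlocks₁₂, Finset.mul_sum, mul_assoc, mul_comm,
      mul_left_comm] using (congrFun (congrFun h (Sum.inl i)) 1).symm
  · simpa [mul_apply, dqA, dqD, mulVec, dotProduct, toBlocks₂₂, Finset.mul_sum, mul_assoc, mul_comm,
      mul_left_comm] using (congrFun (congrFun h (Sum.inr i)) 1).symm

section Rich

variable {Ω : Type*} [MeasureSpace Ω] [IsProbabilityMeasure (volume : Measure Ω)]
  {n : ℕ} {V : Ω → Fin n → ℝ}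

theorem Rich.exists_eq_smul_one (hV : Rich V) {M : Matrix (Fin n) (Fin n) ℝ}
    (hM : ∀ᵐ ω, ∃ l : ℝ, M *ᵥ V ω = l • V ω) : ∃ a : ℝ, M = a • 1 := by
  obtain ⟨B, hB, hBm, hMB⟩ := hM.exists_measurable_mem
  obtain ⟨v, -, hvB, hv⟩ := hV B hBm ((prob_compl_eq_zero_iff hBm).mp (mem_ae_iff.mp hB))
  choose ω hω hωv using hvB
  choose l hl using fun i => hMB (ω i) (hω i)
  obtain ⟨a, ha⟩ := LinearMap.exists_eq_smul_one_of_eigenvectors_in_general_position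
    (by simp) hv (f := M.toLin') (l := l) fun i => by rw [← hωv i]; exact hl i
  exact ⟨a, Matrix.toLin'.injective (by rw [ha, map_smul, toLin'_one]; rfl)⟩

theorem Rich.exists_ae_eq_mul (hV : Rich V) (hV0 : ∀ᵐ ω, V ω ≠ 0)
    {M : Matrix (Fin n) (Fin n) ℝ} {a b : Ω → ℝ} (ha : ∀ᵐ ω, a ω ≠ 0)
    (hM : ∀ᵐ ω, a ω • (M *ᵥ V ω) = b ω • V ω) : ∃ c : ℝ, ∀ᵐ ω, b ω = c * a ω := by
  obtain ⟨c, rfl⟩ := hV.exists_eq_smul_one (M := M) <| by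
    filter_upwards [ha, hM] with ω ha hM
    exact ⟨b ω / a ω, by rw [div_eq_inv_mul, mul_smul, ← hM, inv_smul_smul₀ ha]⟩
  refine ⟨c, ?_⟩
  filter_upwards [hV0, hM] with ω hV0 hM
  rw [smul_mulVec, one_mulVec, smul_smul] at hM
  exact (smul_left_injective ℝ hV0 hM).symm.trans (mul_comm _ _)

theorem Rich.exists_pos_ae_eq_mul (hV : Rich V) (hV0 : ∀ᵐ ω, V ω ≠ 0)
    {M : Matrix (Fin n) (Fin n) ℝ} {a b : Ω → ℝ} (ha : ∀ᵐ ω, 0 < a ω) (hb : ∀ᵐ ω, 0 < b ω)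
    (hM : ∀ᵐ ω, a ω • (M *ᵥ V ω) = b ω • V ω) : ∃ c > 0, ∀ᵐ ω, b ω = c * a ω := by
  obtain ⟨c, hc⟩ := hV.exists_ae_eq_mul hV0 (ha.mono fun _ h => h.ne') hM
  obtain ⟨ω, hcω, haω, hbω⟩ := (hc.and (ha.and hb)).exists
  exact ⟨c, pos_of_mul_pos_left (hcω ▸ hbω) haω.le, hc⟩

end Rich

theorem dq_only_if_direction_general
    {Ω : Type*} [MeasureSpace Ω] [IsProbabilityMeasure (volume : Measure Ω)]
    {q₁ : ℕ}
    {α β : ℝ} (hα : 0 < α) (hαβ : α < β) (hβ : β < 1)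
    (Vα Vβ : Ω → Fin q₁ → ℝ) (fα fβ w₁ w₂ : Ω → ℝ)
    (hfαpos : ∀ᵐ ω, 0 < fα ω) (hfβpos : ∀ᵐ ω, 0 < fβ ω)
    (hw₁pos : ∀ᵐ ω, 0 < w₁ ω) (hw₂pos : ∀ᵐ ω, 0 < w₂ ω)
    (hVeq : ∀ᵐ ω, Vα ω = Vβ ω)
    (hVne : ∀ᵐ ω, Vα ω ≠ 0)
    (hrich : Rich Vα)
    (S : Matrix (Fin 2) (Fin 2) ℝ)
    (hS : S = !![α * (1 - α), α * (1 - β); α * (1 - β), β * (1 - β)])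
    (hCex : ∃ C : Matrix (Fin q₁ ⊕ Fin q₁) (Fin q₁ ⊕ Fin q₁) ℝ, IsUnit C.det ∧
      ∀ᵐ ω, dqA (w₁ ω) (w₂ ω) (Vα ω) (Vβ ω)
        = C * (dqD (fα ω) (fβ ω) (Vα ω) (Vβ ω))ᵀ * S⁻¹) :
    ∃ c₁ > (0 : ℝ), ∃ c₂ > (0 : ℝ), ∃ c₃ > (0 : ℝ),
      (∀ᵐ ω, fα ω = c₁ * fβ ω) ∧
      (∀ᵐ ω, w₁ ω = c₂ * fα ω) ∧
      (∀ᵐ ω, w₂ ω = c₃ * fβ ω) := by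
  obtain ⟨C, -, hC⟩ := hCex
  obtain ⟨hS₀₀, hS₀₁, hS₁₁⟩ : 0 < S 0 0 ∧ 0 < S 0 1 ∧ 0 < S 1 1 := by
    rw [hS]; simp only [of_apply, cons_val', cons_val_zero, cons_val_one, empty_val',
      cons_val_fin_one]
    exact ⟨mul_pos hα (by linarith), mul_pos hα (by linarith), mul_pos (by linarith) (by linarith)⟩
  have hS_det : IsUnit S.det := by
    rw [hS, det_fin_two_of]
    have := mul_pos (mul_pos hα (sub_pos.2 hβ)) (sub_pos.2 hαβ)
    exact isUnit_iff_ne_zero.2 (by nlinarith)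
  have hblocks : ∀ᵐ ω, fα ω • (C.toBlocks₁₁ *ᵥ Vα ω) = (S 0 0 * w₁ ω) • Vα ω ∧
      fβ ω • (C.toBlocks₁₂ *ᵥ Vα ω) = (S 0 1 * w₁ ω) • Vα ω ∧
      fβ ω • (C.toBlocks₂₂ *ᵥ Vα ω) = (S 1 1 * w₂ ω) • Vα ω := by
    filter_upwards [hC, hVeq] with ω hω hVω
    rw [← hVω] at hω
    exact smul_toBlocks_mulVec_of_dqA_mul_eq
      (by rw [hω, nonsing_inv_mul_cancel_right _ _ hS_det])
  obtain ⟨c₁₁, hc₁₁, h₁₁⟩ := hrich.exists_pos_ae_eq_mul hVne hfαpos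
    (hw₁pos.mono fun _ h => mul_pos hS₀₀ h) (hblocks.mono fun _ h => h.1)
  obtain ⟨c₁₂, hc₁₂, h₁₂⟩ := hrich.exists_pos_ae_eq_mul hVne hfβpos
    (hw₁pos.mono fun _ h => mul_pos hS₀₁ h) (hblocks.mono fun _ h => h.2.1)
  obtain ⟨c₂₂, hc₂₂, h₂₂⟩ := hrich.exists_pos_ae_eq_mul hVne hfβpos
    (hw₂pos.mono fun _ h => mul_pos hS₁₁ h) (hblocks.mono fun _ h => h.2.2)
  refine ⟨c₁₂ * S 0 0 / (c₁₁ * S 0 1), by positivity, c₁₁ / S 0 0, by positivity,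
    c₂₂ / S 1 1, by positivity, ?_, ?_, ?_⟩
  · filter_upwards [h₁₁, h₁₂] with ω h₁₁ h₁₂
    field_simp
    linear_combination S 0 0 * h₁₂ - S 0 1 * h₁₁
  · filter_upwards [h₁₁] with ω h₁₁
    field_simp
    linear_combination h₁₁
  · filter_upwards [h₂₂] with ω h₂₂
    field_simp
    linear_combination h₂₂

/-- Only-if direction of Theorem 2(A): under equal model gradients
(`q₁ = q₂`, `V_α = V_β =: V` a.s., `V ≠ 0` a.s.) and the richness condition, if the
M-estimator instrument matrix `A_g` coincides a.s. with an efficient instrument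
`C Dᵀ S⁻¹` for some deterministic invertible `C`, then there are constants
`c₁, c₂, c₃ > 0` with `f_α = c₁ f_β`, `w₁ = c₂ f_α` and `w₂ = c₃ f_β` a.s.
(conditions (13)–(15) of the paper). -/
theorem dq_only_if_direction
    {Ω : Type*} [MeasureSpace Ω] [IsProbabilityMeasure (volume : Measure Ω)]
    {q₁ : ℕ} (hq₁ : 1 ≤ q₁)
    {α β : ℝ} (hα : 0 < α) (hαβ : α < β) (hβ : β < 1)
    (Vα Vβ : Ω → Fin q₁ → ℝ) (fα fβ w₁ w₂ : Ω → ℝ)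
    (hVαmeas : Measurable Vα) (hVβmeas : Measurable Vβ)
    (hfαmeas : Measurable fα) (hfβmeas : Measurable fβ)
    (hw₁meas : Measurable w₁) (hw₂meas : Measurable w₂)
    (hfαpos : ∀ᵐ ω, 0 < fα ω) (hfβpos : ∀ᵐ ω, 0 < fβ ω)
    (hw₁pos : ∀ᵐ ω, 0 < w₁ ω) (hw₂pos : ∀ᵐ ω, 0 < w₂ ω)
    (hVeq : ∀ᵐ ω, Vα ω = Vβ ω)
    (hVne : ∀ᵐ ω, Vα ω ≠ 0)
    (hrich : Rich Vα)
    (S : Matrix (Fin 2) (Fin 2) ℝ)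
    (hS : S = !![α * (1 - α), α * (1 - β); α * (1 - β), β * (1 - β)])
    (hCex : ∃ C : Matrix (Fin q₁ ⊕ Fin q₁) (Fin q₁ ⊕ Fin q₁) ℝ, IsUnit C.det ∧
      ∀ᵐ ω, dqA (w₁ ω) (w₂ ω) (Vα ω) (Vβ ω)
        = C * (dqD (fα ω) (fβ ω) (Vα ω) (Vβ ω))ᵀ * S⁻¹) :
    ∃ c₁ > (0 : ℝ), ∃ c₂ > (0 : ℝ), ∃ c₃ > (0 : ℝ),
      (∀ᵐ ω, fα ω = c₁ * fβ ω) ∧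
      (∀ᵐ ω, w₁ ω = c₂ * fα ω) ∧
      (∀ᵐ ω, w₂ ω = c₃ * fβ ω) :=
  dq_only_if_direction_general hα hαβ hβ Vα Vβ fα fβ w₁ w₂ hfαpos hfβpos hw₁pos hw₂pos hVeq hVne
    hrich S hS hCex
end

section
/- Identification step in the proof of the strict-identification Proposition for linear double quantile models: Let X : Ω → ℝ^p be a random vector on a probability space (Ω, 𝒜, ℙ), and let F : Ω × ℝ → ℝ be such that for ℙ-a.e. ω the function F(ω, ·) is differentiable on ℝ with derivative f(ω, ·) strictly positive everywhere. Let θ, θ₀ ∈ ℝ^p and assume that the real random variable ω ↦ f(ω, X(ω)ᵀθ₀) · (F(ω, X(ω)ᵀθ) − F(ω, X(ω)ᵀθ₀)) · (X(ω)ᵀ(θ − θ₀)) is integrable with expectation zero. Then X(ω)ᵀθ = X(ω)ᵀθ₀ for ℙ-a.e. ω. -/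
open MeasureTheory Matrix

/-! The integrand is `f(ω, Xᵀθ₀)` times `(F(ω, Xᵀθ) − F(ω, Xᵀθ₀)) (Xᵀθ − Xᵀθ₀)`, and the latter
product is nonnegative, vanishing only when `Xᵀθ = Xᵀθ₀`, because `F(ω, ·)` is strictly increasing.
A nonnegative integrand with zero integral vanishes almost everywhere. -/

theorem StrictMono.sub_mul_sub_pos {R : Type*} [CommRing R] [LinearOrder R] [IsStrictOrderedRing R]
    {g : R → R} (hg : StrictMono g) {a b : R} (hab : a ≠ b) : 0 < (g a - g b) * (a - b) := by
  rcases hab.lt_or_gt with h | h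
  · exact mul_pos_of_neg_of_neg (sub_neg.2 (hg h)) (sub_neg.2 h)
  · exact mul_pos (sub_pos.2 (hg h)) (sub_pos.2 h)

theorem linear_quantile_identification_step_general
    {Ω : Type*} [MeasureSpace Ω]
    {p : ℕ} (X : Ω → Fin p → ℝ)
    (F f : Ω → ℝ → ℝ)
    (hF : ∀ᵐ ω, ∀ y : ℝ, HasDerivAt (F ω) (f ω y) y ∧ 0 < f ω y)
    (θ θ₀ : Fin p → ℝ)
    (hint : Integrable fun ω =>
      f ω (X ω ⬝ᵥ θ₀) * (F ω (X ω ⬝ᵥ θ) - F ω (X ω ⬝ᵥ θ₀)) * (X ω ⬝ᵥ (θ - θ₀)))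
    (hzero : ∫ ω,
      f ω (X ω ⬝ᵥ θ₀) * (F ω (X ω ⬝ᵥ θ) - F ω (X ω ⬝ᵥ θ₀)) * (X ω ⬝ᵥ (θ - θ₀)) = 0) :
    ∀ᵐ ω, X ω ⬝ᵥ θ = X ω ⬝ᵥ θ₀ := by
  have hmono : ∀ᵐ ω, StrictMono (F ω) ∧ 0 < f ω (X ω ⬝ᵥ θ₀) := hF.mono fun ω h =>
    ⟨strictMono_of_hasDerivAt_pos (fun y => (h y).1) (fun y => (h y).2), (h _).2⟩
  have hnonneg : 0 ≤ᵐ[volume] fun ω =>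
      f ω (X ω ⬝ᵥ θ₀) * (F ω (X ω ⬝ᵥ θ) - F ω (X ω ⬝ᵥ θ₀)) * (X ω ⬝ᵥ (θ - θ₀)) := by
    filter_upwards [hmono] with ω ⟨hF_mono, hf_pos⟩
    rw [dotProduct_sub, mul_assoc]
    exact mul_nonneg hf_pos.le ((monovary_id_iff.2 hF_mono.monotone).sub_mul_sub_nonneg _ _)
  filter_upwards [hmono, (integral_eq_zero_iff_of_nonneg_ae hnonneg hint).1 hzero]
    with ω ⟨hF_mono, hf_pos⟩ hvanish
  by_contra hne
  rw [Pi.zero_apply, dotProduct_sub, mul_assoc] at hvanish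
  exact (mul_pos hf_pos (hF_mono.sub_mul_sub_pos hne)).ne' hvanish

/-- Identification step for linear double quantile models: if for a.e.
`ω` the conditional cdf `F(ω, ·)` is differentiable with strictly positive derivative
`f(ω, ·)`, and the random variable
`f(ω, Xᵀθ₀) (F(ω, Xᵀθ) − F(ω, Xᵀθ₀)) (Xᵀ(θ − θ₀))` is integrable with expectation zero,
then `Xᵀθ = Xᵀθ₀` almost surely. -/
theorem linear_quantile_identification_step
    {Ω : Type*} [MeasureSpace Ω] [IsProbabilityMeasure (volume : Measure Ω)]
    {p : ℕ} (X : Ω → Fin p → ℝ)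
    (F f : Ω → ℝ → ℝ)
    (hF : ∀ᵐ ω, ∀ y : ℝ, HasDerivAt (F ω) (f ω y) y ∧ 0 < f ω y)
    (θ θ₀ : Fin p → ℝ)
    (hint : Integrable fun ω =>
      f ω (X ω ⬝ᵥ θ₀) * (F ω (X ω ⬝ᵥ θ) - F ω (X ω ⬝ᵥ θ₀)) * (X ω ⬝ᵥ (θ - θ₀)))
    (hzero : ∫ ω,
      f ω (X ω ⬝ᵥ θ₀) * (F ω (X ω ⬝ᵥ θ) - F ω (X ω ⬝ᵥ θ₀)) * (X ω ⬝ᵥ (θ - θ₀)) = 0) :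
    ∀ᵐ ω, X ω ⬝ᵥ θ = X ω ⬝ᵥ θ₀ :=
  linear_quantile_identification_step_general X F f hF θ θ₀ hint hzero
end
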